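/- arXiv:1409.6705 — 4 statements merged into one kernel-verified Lean document; each statement's English description precedes it below -/
import Mathlib

section
/- Let X be a Banach space, let c > 0, and let T : X → X be a map with T(0) = 0 satisfying ‖T x − T y‖ ≤ c(‖x‖ + ‖y‖)‖x − y‖ for all x, y ∈ X. Then for every y ∈ X with ‖y‖ ≤ 1/(10c) there exists a unique x ∈ X with ‖x‖ ≤ 1/(5c) solving x + T x = y; moreover this solution satisfies ‖x‖ ≤ 2‖y‖. -/
/-!
On the ball of radius `R = 1/(5c)` the estimate makes `T` Lipschitz with constant
`2cR = 2/5 < 1`, so `x ↦ y - T x` is a contraction of that ball into itself as soon as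
`‖y‖ ≤ (1 - 2/5) R`, which `‖y‖ ≤ 1/(10c)` guarantees. Its fixed point solves `x + T x = y`;
it is the only solution in the ball because `id + T` is injective there, and
`‖x‖ ≤ ‖y‖ + ‖T x‖ ≤ ‖y‖ + (2/5)‖x‖` gives `‖x‖ ≤ (5/3)‖y‖`.
-/

open Metric Set NNReal

section PerturbationOfIdentity

variable {E : Type*} [NormedAddCommGroup E] {T : E → E} {K : ℝ≥0}

theorem lipschitzOnWith_closedBall_of_norm_sub_le_mul_add {F : Type*} [NormedAddCommGroup F]
    {T : E → F} {c R : ℝ} (hc : 0 ≤ c) (hK : c * (2 * R) ≤ K)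
    (hT : ∀ x y, ‖T x - T y‖ ≤ c * (‖x‖ + ‖y‖) * ‖x - y‖) :
    LipschitzOnWith K T (closedBall 0 R) := by
  refine lipschitzOnWith_iff_norm_sub_le.2 fun x hx y hy => (hT x y).trans ?_
  rw [mem_closedBall_zero_iff] at hx hy
  have : c * (‖x‖ + ‖y‖) ≤ K := (mul_le_mul_of_nonneg_left (by linarith) hc).trans hK
  exact mul_le_mul_of_nonneg_right this (norm_nonneg _)

theorem LipschitzOnWith.injOn_add_self {s : Set E} (hT : LipschitzOnWith K T s) (hK : K < 1) :
    InjOn (fun x => x + T x) s := by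
  intro x hx x' hx' h
  have hsub : x - x' = T x' - T x := by
    rw [sub_eq_sub_iff_add_eq_add, add_comm (T x')]
    exact h
  have hdist : ‖x - x'‖ ≤ K * ‖x - x'‖ := by
    calc ‖x - x'‖ = ‖T x' - T x‖ := by rw [hsub]
      _ ≤ K * ‖x' - x‖ := lipschitzOnWith_iff_norm_sub_le.1 hT hx' hx
      _ = K * ‖x - x'‖ := by rw [norm_sub_rev]
  have hK' : (K : ℝ) < 1 := by exact_mod_cast hK
  have : ‖x - x'‖ = 0 := by nlinarith [norm_nonneg (x - x')]
  exact sub_eq_zero.1 (norm_eq_zero.1 this)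

theorem LipschitzOnWith.norm_le_norm_add_self_div {s : Set E} (hT : LipschitzOnWith K T s)
    (hK : K < 1) (hT0 : T 0 = 0) (h0 : (0 : E) ∈ s) {x : E} (hx : x ∈ s) :
    ‖x‖ ≤ ‖x + T x‖ / (1 - K) := by
  have hTx : ‖T x‖ ≤ K * ‖x‖ := by
    simpa [hT0] using lipschitzOnWith_iff_norm_sub_le.1 hT hx h0
  have hK' : (K : ℝ) < 1 := by exact_mod_cast hK
  rw [le_div_iff₀ (by linarith)]
  have : ‖x‖ ≤ ‖x + T x‖ + ‖T x‖ := by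
    simpa using _root_.norm_sub_le (x + T x) (T x)
  linarith

theorem LipschitzOnWith.exists_add_self_eq [CompleteSpace E] {R : ℝ}
    (hT : LipschitzOnWith K T (closedBall 0 R)) (hK : K < 1) (hT0 : T 0 = 0) {y : E}
    (hy : ‖y‖ ≤ (1 - K) * R) :
    ∃ x ∈ closedBall (0 : E) R, x + T x = y := by
  have hK' : (K : ℝ) < 1 := by exact_mod_cast hK
  have hR : 0 ≤ R := nonneg_of_mul_nonneg_right ((norm_nonneg y).trans hy) (by linarith)
  have hmaps : MapsTo (fun x => y - T x) (closedBall 0 R) (closedBall 0 R) := by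
    intro x hx
    have hTx : ‖T x‖ ≤ K * R := by
      have := lipschitzOnWith_iff_norm_sub_le.1 hT hx (mem_closedBall_self hR)
      rw [hT0, sub_zero, sub_zero] at this
      exact this.trans (mul_le_mul_of_nonneg_left (mem_closedBall_zero_iff.1 hx) K.2)
    rw [mem_closedBall_zero_iff]
    linarith [_root_.norm_sub_le y (T x)]
  have hlip : LipschitzOnWith K (fun x => y - T x) (closedBall 0 R) :=
    lipschitzOnWith_iff_norm_sub_le.2 fun a ha b hb => by
      rw [sub_sub_sub_cancel_left, norm_sub_rev]
      exact lipschitzOnWith_iff_norm_sub_le.1 hT ha hb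
  obtain ⟨x, hx, hfix, -⟩ := ContractingWith.exists_fixedPoint' isClosed_closedBall.isComplete
    hmaps ⟨hK, hlip.mapsToRestrict hmaps⟩ (mem_closedBall_self hR) (edist_ne_top _ _)
  exact ⟨x, hx, eq_sub_iff_add_eq.1 hfix.eq.symm⟩

end PerturbationOfIdentity

/-- Banach fixed-point lemma, Donaldson–Kronheimer Lemma 7.2.23.
If `X` is a Banach space, `T : X → X` satisfies `T 0 = 0` and
`‖Tx − Ty‖ ≤ c(‖x‖ + ‖y‖)‖x − y‖`, then for every `y` with `‖y‖ ≤ 1/(10c)` there is a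
unique `x` with `‖x‖ ≤ 1/(5c)` solving `x + Tx = y`, and it satisfies `‖x‖ ≤ 2‖y‖`. -/
theorem statement5 {X : Type*} [NormedAddCommGroup X] [NormedSpace ℝ X] [CompleteSpace X]
    (c : ℝ) (hc : 0 < c) (T : X → X) (hT0 : T 0 = 0)
    (hT : ∀ x y : X, ‖T x - T y‖ ≤ c * (‖x‖ + ‖y‖) * ‖x - y‖)
    (y : X) (hy : ‖y‖ ≤ 1 / (10 * c)) :
    ∃ x : X, (‖x‖ ≤ 1 / (5 * c) ∧ x + T x = y ∧ ‖x‖ ≤ 2 * ‖y‖) ∧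
      ∀ x' : X, ‖x'‖ ≤ 1 / (5 * c) → x' + T x' = y → x' = x := by
  have hK : ((2 / 5 : ℝ≥0) : ℝ) = 2 / 5 := by norm_num
  have hlip : LipschitzOnWith (2 / 5) T (closedBall 0 (1 / (5 * c))) :=
    lipschitzOnWith_closedBall_of_norm_sub_le_mul_add hc.le
      (by rw [hK]; field_simp; norm_num) hT
  have hK1 : (2 / 5 : ℝ≥0) < 1 := by rw [← NNReal.coe_lt_coe, hK]; norm_num
  have hy' : ‖y‖ ≤ (1 - ((2 / 5 : ℝ≥0) : ℝ)) * (1 / (5 * c)) := by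
    refine hy.trans ?_
    rw [hK, div_le_iff₀ (by positivity)]
    field_simp
    norm_num
  obtain ⟨x, hx, hxy⟩ := hlip.exists_add_self_eq hK1 hT0 hy'
  have hx_le : ‖x‖ ≤ 2 * ‖y‖ := by
    have := hlip.norm_le_norm_add_self_div hK1 hT0 (mem_closedBall_self (by positivity)) hx
    rw [hxy, hK] at this
    norm_num at this
    linarith [norm_nonneg y]
  refine ⟨x, ⟨mem_closedBall_zero_iff.1 hx, hxy, hx_le⟩, fun x' hx' hx'y => ?_⟩
  exact hlip.injOn_add_self hK1 (mem_closedBall_zero_iff.2 hx') hx (hx'y.trans hxy.symm)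
end

section
/- For every ℓ ∈ ℝ and δ ≤ 0 there exists a constant c > 0, depending only on ℓ and δ, such that for all λ ∈ (0,1], all N ≥ 1, and all x ∈ X with r(x) ≤ N·√λ: c⁻¹ · w_{ℓ,δ;λ}(x) ≤ λ^{−ℓ} · (1 + r(x)/λ)^{−ℓ−δ} ≤ c · N^{−2δ} · w_{ℓ,δ;λ}(x). (This is the weight-function content of the comparison between the weighted norms on X near Q and the λ-rescaled weighted norms on the model ℝ⁴ × ℝ⁴.) -/
/-!
Write `r = dist(x, Q)`. The middle term equals `λ^δ (λ + r)^(-ℓ-δ)`, which is the weight itself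
when `r ≤ √λ`. When `√λ < r ≤ N√λ` it equals `r^(-ℓ+δ) · (λ/r²)^δ · ((λ+r)/r)^(-ℓ-δ)`: since
`λ ≤ √λ < r`, the last factor lies between `2^(-|ℓ+δ|)` and `2^|ℓ+δ|`, and since `λ/r² ∈ [N⁻², 1]`
and `δ ≤ 0`, the middle one lies in `[1, N^(-2δ)]`. Hence `c = 2^|ℓ+δ|` works.
-/

open scoped BigOperators ENNReal

noncomputable section

/-- The weight function `w_{ℓ,δ;λ}` associated with the subset `Q ⊆ X`:
`w_{ℓ,δ;λ}(x) = λ^δ (λ + r(x))^{−ℓ−δ}` if `r(x) ≤ √λ` and `r(x)^{−ℓ+δ}` otherwise,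
where `r(x) = dist(x, Q)`. -/
def wt {X : Type*} [MetricSpace X] (Q : Set X) (l d lam : ℝ) (x : X) : ℝ :=
  if Metric.infDist x Q ≤ Real.sqrt lam then
    lam ^ d * (lam + Metric.infDist x Q) ^ (-l - d)
  else (Metric.infDist x Q) ^ (-l + d)

/-- The weighted sup-norm `‖f‖_{L∞_{ℓ,δ;λ}} = sup_x w_{ℓ,δ;λ}(x)‖f(x)‖`, valued in `[0,∞]`. -/
def wnorm {X : Type*} [MetricSpace X] (Q : Set X) (l d lam : ℝ)
    {E : Type*} [NormedAddCommGroup E] (f : X → E) : ℝ≥0∞ :=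
  ⨆ x : X, ENNReal.ofReal (wt Q l d lam x * ‖f x‖)

/-- The weighted Hölder seminorm `[f]_{C^{0,α}_{ℓ,δ;λ}}`, the supremum of
`w_{ℓ−α,δ;λ}(x,y)‖f(x) − f(y)‖/d(x,y)^α` over pairs `x ≠ y` with
`d(x,y) ≤ λ + min(r(x), r(y))`, valued in `[0,∞]`. -/
def wseminorm {X : Type*} [MetricSpace X] (Q : Set X) (l d lam a : ℝ)
    {E : Type*} [NormedAddCommGroup E] (f : X → E) : ℝ≥0∞ :=
  ⨆ p : {p : X × X // p.1 ≠ p.2 ∧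
      dist p.1 p.2 ≤ lam + min (Metric.infDist p.1 Q) (Metric.infDist p.2 Q)},
    ENNReal.ofReal
      (min (wt Q (l - a) d lam p.1.1) (wt Q (l - a) d lam p.1.2) *
        ‖f p.1.1 - f p.1.2‖ / dist p.1.1 p.1.2 ^ a)

/-- The weighted Hölder norm `‖f‖_{C^{0,α}_{ℓ,δ;λ}} = ‖f‖_{L∞_{ℓ,δ;λ}} + [f]_{C^{0,α}_{ℓ,δ;λ}}`. -/
def wCnorm {X : Type*} [MetricSpace X] (Q : Set X) (l d lam a : ℝ)
    {E : Type*} [NormedAddCommGroup E] (f : X → E) : ℝ≥0∞ :=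
  wnorm Q l d lam f + wseminorm Q l d lam a f

namespace Real

lemma rpow_mem_Icc_of_one_le_of_le {t b : ℝ} (e : ℝ) (h1 : 1 ≤ t) (hb : t ≤ b) :
    b ^ (-|e|) ≤ t ^ e ∧ t ^ e ≤ b ^ |e| := by
  have ht : 0 < t := one_pos.trans_le h1
  constructor
  · calc b ^ (-|e|) ≤ t ^ (-|e|) := rpow_le_rpow_of_nonpos ht hb (by simp)
      _ ≤ t ^ e := rpow_le_rpow_of_exponent_le h1 (neg_abs_le e)
  · calc t ^ e ≤ t ^ |e| := rpow_le_rpow_of_exponent_le h1 (le_abs_self e)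
      _ ≤ b ^ |e| := rpow_le_rpow ht.le hb (abs_nonneg e)

lemma rpow_neg_mul_one_add_div_rpow {lam r : ℝ} (l d : ℝ) (hlam : 0 < lam) (hr : 0 ≤ r) :
    lam ^ (-l) * (1 + r / lam) ^ (-l - d) = lam ^ d * (lam + r) ^ (-l - d) := by
  rw [one_add_div hlam.ne', div_rpow (by positivity) hlam.le, mul_div_left_comm,
    ← rpow_sub hlam, sub_sub_cancel, mul_comm]

lemma rpow_mul_add_rpow_eq_rpow_mul_div_sq_rpow_mul {lam r : ℝ} (l d : ℝ) (hlam : 0 < lam) (hr : 0 < r) :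
    lam ^ d * (lam + r) ^ (-l - d) =
      r ^ (-l + d) * ((lam / r ^ 2) ^ d * ((lam + r) / r) ^ (-l - d)) := by
  have hsplit : r ^ (-l + d) = (r ^ 2) ^ d * r ^ (-l - d) := by
    rw [← rpow_natCast_mul hr.le, ← rpow_add hr]; ring_nf
  rw [hsplit, div_rpow hlam.le (by positivity), div_rpow (by positivity) hr.le]
  have : 0 < (r ^ 2) ^ d := by positivity
  have : 0 < r ^ (-l - d) := by positivity
  field_simp

lemma rpow_div_sq_mem_Icc {lam r N d : ℝ} (hlam : 0 < lam) (hN : 0 < N) (hd : d ≤ 0)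
    (hlr : lam ≤ r ^ 2) (hrN : r ^ 2 ≤ N ^ 2 * lam) :
    1 ≤ (lam / r ^ 2) ^ d ∧ (lam / r ^ 2) ^ d ≤ N ^ (-(2 * d)) := by
  have hr2 : 0 < r ^ 2 := hlam.trans_le hlr
  constructor
  · exact one_le_rpow_of_pos_of_le_one_of_nonpos (by positivity) ((div_le_one hr2).2 hlr) hd
  · rw [rpow_neg hN.le, rpow_mul hN.le, rpow_two, ← inv_rpow (by positivity)]
    refine rpow_le_rpow_of_nonpos (by positivity) ?_ hd
    rw [inv_le_iff_one_le_mul₀ (by positivity), div_mul_eq_mul_div, one_le_div hr2, mul_comm]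
    exact hrN

end Real

open Real

lemma wt_nonneg {X : Type*} [MetricSpace X] (Q : Set X) (l d : ℝ) {lam : ℝ} (hlam : 0 ≤ lam)
    (x : X) : 0 ≤ wt Q l d lam x := by
  have : 0 ≤ Metric.infDist x Q := Metric.infDist_nonneg
  unfold wt
  split_ifs <;> positivity

lemma exists_rpow_neg_mul_one_add_div_rpow_eq_mul_wt {X : Type*} [MetricSpace X] (Q : Set X)
    (l d : ℝ) (hd : d ≤ 0) {lam N : ℝ} (hlam : 0 < lam) (hlam1 : lam ≤ 1) (hN : 1 ≤ N) {x : X}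
    (hx : Metric.infDist x Q ≤ N * √lam) :
    ∃ f : ℝ, 2 ^ (-|-l - d|) ≤ f ∧ f ≤ 2 ^ |-l - d| * N ^ (-(2 * d)) ∧
      lam ^ (-l) * (1 + Metric.infDist x Q / lam) ^ (-l - d) = f * wt Q l d lam x := by
  set r := Metric.infDist x Q
  have hr : 0 ≤ r := Metric.infDist_nonneg
  rw [rpow_neg_mul_one_add_div_rpow l d hlam hr, wt]
  split_ifs with hnear
  · refine ⟨1, rpow_le_one_of_one_le_of_nonpos one_le_two (by simp), ?_, (one_mul _).symm⟩
    exact one_le_mul_of_one_le_of_one_le (one_le_rpow one_le_two (abs_nonneg _))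
      (one_le_rpow hN (by linarith))
  · push Not at hnear
    have hsqrt : 0 < √lam := sqrt_pos.2 hlam
    have hrpos : 0 < r := hsqrt.trans hnear
    have hsq : √lam ^ 2 = lam := sq_sqrt hlam.le
    have hlr2 : lam ≤ r ^ 2 := hsq ▸ pow_le_pow_left₀ hsqrt.le hnear.le 2
    have hrN : r ^ 2 ≤ N ^ 2 * lam := by
      rw [← hsq, ← mul_pow]; exact pow_le_pow_left₀ hr hx 2
    have hlr : lam ≤ r := ((le_sqrt hlam.le hlam.le).2 (by nlinarith)).trans hnear.le
    obtain ⟨hs1, hsN⟩ := rpow_div_sq_mem_Icc hlam (by linarith) hd hlr2 hrN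
    obtain ⟨ht1, ht2⟩ := rpow_mem_Icc_of_one_le_of_le (t := (lam + r) / r) (b := 2) (-l - d)
      ((one_le_div hrpos).2 (by linarith)) ((div_le_iff₀ hrpos).2 (by linarith))
    refine ⟨_, ht1.trans (le_mul_of_one_le_left (by positivity) hs1),
      (mul_le_mul hsN ht2 (by positivity) (by positivity)).trans_eq (mul_comm _ _),
      (rpow_mul_add_rpow_eq_rpow_mul_div_sq_rpow_mul l d hlam hrpos).trans (mul_comm _ _)⟩

theorem statement10_general {X : Type*} [MetricSpace X] (Q : Set X)
    (l d : ℝ) (hd : d ≤ 0) :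
    ∃ c : ℝ, 0 < c ∧ ∀ lam : ℝ, 0 < lam → lam ≤ 1 → ∀ N : ℝ, 1 ≤ N → ∀ x : X,
      Metric.infDist x Q ≤ N * Real.sqrt lam →
        c⁻¹ * wt Q l d lam x ≤
            lam ^ (-l) * (1 + Metric.infDist x Q / lam) ^ (-l - d) ∧
          lam ^ (-l) * (1 + Metric.infDist x Q / lam) ^ (-l - d) ≤
            c * N ^ (-(2 * d)) * wt Q l d lam x := by
  refine ⟨2 ^ |-l - d|, by positivity, fun lam hlam hlam1 N hN x hx => ?_⟩
  obtain ⟨f, hf_ge, hf_le, hmid⟩ :=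
    exists_rpow_neg_mul_one_add_div_rpow_eq_mul_wt Q l d hd hlam hlam1 hN hx
  have hw := wt_nonneg Q l d hlam.le x
  rw [hmid, ← rpow_neg zero_le_two]
  exact ⟨mul_le_mul_of_nonneg_right hf_ge hw, mul_le_mul_of_nonneg_right hf_le hw⟩

/-- For `ℓ ∈ ℝ` and `δ ≤ 0` there is `c > 0`, depending only on `ℓ, δ`,
such that for all `λ ∈ (0,1]`, `N ≥ 1` and `x` with `r(x) ≤ N√λ`,
`c⁻¹ w_{ℓ,δ;λ}(x) ≤ λ^{−ℓ}(1 + r(x)/λ)^{−ℓ−δ} ≤ c N^{−2δ} w_{ℓ,δ;λ}(x)`. -/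
theorem statement10 {X : Type*} [MetricSpace X] (Q : Set X) (hQ : Q.Nonempty)
    (l d : ℝ) (hd : d ≤ 0) :
    ∃ c : ℝ, 0 < c ∧ ∀ lam : ℝ, 0 < lam → lam ≤ 1 → ∀ N : ℝ, 1 ≤ N → ∀ x : X,
      Metric.infDist x Q ≤ N * Real.sqrt lam →
        c⁻¹ * wt Q l d lam x ≤
            lam ^ (-l) * (1 + Metric.infDist x Q / lam) ^ (-l - d) ∧
          lam ^ (-l) * (1 + Metric.infDist x Q / lam) ^ (-l - d) ≤
            c * N ^ (-(2 * d)) * wt Q l d lam x :=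
  statement10_general Q l d hd
end
end

section
/- Let ℓ ≤ −1 and δ ∈ ℝ satisfy ℓ + δ < −1, and let σ > 0. There exists a constant c > 0 such that for all λ ∈ (0, min{1, σ²}]: ∫₀^{√λ} λ^{2−δ} (λ + r)^{ℓ+δ−3} r³ dr + ∫_{√λ}^{σ} λ² r^{ℓ−δ} (λ + r)^{−3} r³ dr ≤ c · λ^{3+ℓ}. -/
/-!
Since `r ≤ λ + r`, the first integrand is at most `λ^{2-δ} (λ + r)^{ℓ+δ}`, and as `ℓ + δ < -1` its
integral over all `r ≥ 0` is `λ^{2-δ} λ^{ℓ+δ+1} / (-(ℓ+δ+1))`. In the second integrand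
`(λ + r)^{-3} r^3 ≤ 1`, and for `r ≥ √λ` the factor `r^{2(ℓ+1)}` of `r^{ℓ-δ}` is at most `λ^{ℓ+1}`
because `ℓ + 1 ≤ 0`; the remaining power `r^{-ℓ-δ-2}` has exponent `> -1`, so it is integrable
down to `r = 0`.
-/

open MeasureTheory Set

namespace Real

theorem rpow_sub_natCast_mul_pow_le {x r : ℝ} (p : ℝ) (n : ℕ) (hx : 0 < x) (hr : 0 ≤ r)
    (hrx : r ≤ x) : x ^ (p - n) * r ^ n ≤ x ^ p :=
  calc x ^ (p - n) * r ^ n ≤ x ^ (p - n) * x ^ n := by gcongr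
    _ = x ^ p := by rw [rpow_sub_natCast hx.ne', div_mul_cancel₀ _ (pow_pos hx n).ne']

theorem rpow_two_mul_le_of_sqrt_le {a r q : ℝ} (ha : 0 < a) (hr : √a ≤ r) (hq : q ≤ 0) :
    r ^ (2 * q) ≤ a ^ q := by
  have hr0 : 0 ≤ r := (sqrt_nonneg a).trans hr
  have ha_le : a ≤ r ^ 2 := by
    simpa only [sq_sqrt ha.le] using pow_le_pow_left₀ (sqrt_nonneg a) hr 2
  rw [rpow_mul hr0, rpow_two]
  exact rpow_le_rpow_of_nonpos ha ha_le hq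

end Real

open Real

theorem integral_rpow_le_of_lt_neg_one {p a b : ℝ} (hp : p < -1) (ha : 0 < a) (hab : a ≤ b) :
    ∫ u in a..b, u ^ p ≤ a ^ (p + 1) / -(p + 1) := by
  rw [integral_rpow (Or.inr ⟨hp.ne, notMem_uIcc_of_lt ha (ha.trans_le hab)⟩), ← neg_div_neg_eq,
    neg_sub]
  gcongr
  · linarith
  · exact sub_le_self _ (rpow_nonneg (ha.le.trans hab) _)

theorem integral_rpow_le_of_neg_one_lt {p a b : ℝ} (hp : -1 < p) (ha : 0 ≤ a) :
    ∫ u in a..b, u ^ p ≤ b ^ (p + 1) / (p + 1) := by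
  rw [integral_rpow (Or.inl hp)]
  gcongr
  · linarith
  · exact sub_le_self _ (rpow_nonneg ha _)

theorem integral_inner_le {l d lam s : ℝ} (hld : l + d < -1) (hlam : 0 < lam) (hs : 0 ≤ s) :
    ∫ r in (0 : ℝ)..s, lam ^ (2 - d) * (lam + r) ^ (l + d - 3) * r ^ 3 ≤
      lam ^ (3 + l) / -(l + d + 1) := by
  have hpos : ∀ r ∈ uIcc 0 s, lam + r ≠ 0 := fun r hr => by
    rw [uIcc_of_le hs] at hr; linarith [hr.1]
  calc ∫ r in (0 : ℝ)..s, lam ^ (2 - d) * (lam + r) ^ (l + d - 3) * r ^ 3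
      ≤ ∫ r in (0 : ℝ)..s, lam ^ (2 - d) * (lam + r) ^ (l + d) := by
        refine intervalIntegral.integral_mono_on hs ?_ ?_ fun r hr => ?_
        · exact (ContinuousOn.mul (continuousOn_const.mul
            (ContinuousOn.rpow_const (by fun_prop) fun r hr => Or.inl (hpos r hr)))
            (by fun_prop)).intervalIntegrable
        · exact (continuousOn_const.mul (ContinuousOn.rpow_const (by fun_prop)
            fun r hr => Or.inl (hpos r hr))).intervalIntegrable
        · rw [mul_assoc]
          gcongr
          exact_mod_cast rpow_sub_natCast_mul_pow_le (l + d) 3 (by linarith [hr.1]) hr.1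
            (by linarith)
    _ = lam ^ (2 - d) * ∫ u in lam..lam + s, u ^ (l + d) := by
        rw [intervalIntegral.integral_const_mul, intervalIntegral.integral_comp_add_left
          (fun u => u ^ (l + d)), add_zero]
    _ ≤ lam ^ (2 - d) * (lam ^ (l + d + 1) / -(l + d + 1)) := by
        gcongr
        exact integral_rpow_le_of_lt_neg_one (by linarith) hlam (by linarith)
    _ = lam ^ (3 + l) / -(l + d + 1) := by
        rw [mul_div_assoc', ← rpow_add hlam]
        ring_nf

theorem outer_integrand_le {l d lam r : ℝ} (hl : l ≤ -1) (hlam : 0 < lam) (hr : √lam ≤ r) :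
    lam ^ 2 * r ^ (l - d) * (lam + r) ^ (-3 : ℝ) * r ^ 3 ≤ lam ^ (3 + l) * r ^ (-l - d - 2) := by
  have hr0 : 0 < r := (sqrt_pos.mpr hlam).trans_le hr
  have hcube : (lam + r) ^ (-3 : ℝ) * r ^ 3 ≤ 1 := by
    simpa using rpow_sub_natCast_mul_pow_le 0 3 (by linarith) hr0.le (by linarith)
  have hsplit : r ^ (l - d) = r ^ (2 * (l + 1)) * r ^ (-l - d - 2) := by
    rw [← rpow_add hr0]; ring_nf
  calc lam ^ 2 * r ^ (l - d) * (lam + r) ^ (-3 : ℝ) * r ^ 3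
      = lam ^ 2 * r ^ (l - d) * ((lam + r) ^ (-3 : ℝ) * r ^ 3) := by ring
    _ ≤ lam ^ 2 * (r ^ (2 * (l + 1)) * r ^ (-l - d - 2)) := by
        rw [← hsplit]
        exact mul_le_of_le_one_right (by positivity) hcube
    _ ≤ lam ^ 2 * (lam ^ (l + 1) * r ^ (-l - d - 2)) := by
        gcongr
        exact rpow_two_mul_le_of_sqrt_le hlam hr (by linarith)
    _ = lam ^ (3 + l) * r ^ (-l - d - 2) := by
        rw [← mul_assoc, ← rpow_natCast, ← rpow_add hlam]
        ring_nf

theorem integral_outer_le {l d lam σ : ℝ} (hl : l ≤ -1) (hld : l + d < -1) (hlam : 0 < lam)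
    (hσ : √lam ≤ σ) :
    ∫ r in √lam..σ, lam ^ 2 * r ^ (l - d) * (lam + r) ^ (-3 : ℝ) * r ^ 3 ≤
      lam ^ (3 + l) * (σ ^ (-l - d - 1) / (-l - d - 1)) := by
  have hpos : ∀ r ∈ uIcc √lam σ, 0 < r := fun r hr => by
    rw [uIcc_of_le hσ] at hr; exact (sqrt_pos.mpr hlam).trans_le hr.1
  calc ∫ r in √lam..σ, lam ^ 2 * r ^ (l - d) * (lam + r) ^ (-3 : ℝ) * r ^ 3
      ≤ ∫ r in √lam..σ, lam ^ (3 + l) * r ^ (-l - d - 2) := by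
        refine intervalIntegral.integral_mono_on hσ ?_ ?_
          fun r hr => outer_integrand_le hl hlam hr.1
        · refine (ContinuousOn.mul (ContinuousOn.mul (continuousOn_const.mul
            (ContinuousOn.rpow_const continuousOn_id fun r hr => Or.inl (hpos r hr).ne'))
            (ContinuousOn.rpow_const (by fun_prop) fun r hr => Or.inl ?_))
            (by fun_prop)).intervalIntegrable
          linarith [hpos r hr]
        · exact (continuousOn_const.mul (ContinuousOn.rpow_const continuousOn_id
            fun r hr => Or.inl (hpos r hr).ne')).intervalIntegrable
    _ = lam ^ (3 + l) * ∫ r in √lam..σ, r ^ (-l - d - 2) := intervalIntegral.integral_const_mul _ _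
    _ ≤ lam ^ (3 + l) * (σ ^ (-l - d - 1) / (-l - d - 1)) := by
        have h := integral_rpow_le_of_neg_one_lt (a := √lam) (b := σ) (p := -l - d - 2)
          (by linarith) (sqrt_nonneg _)
        rw [show -l - d - 2 + 1 = -l - d - 1 by ring] at h
        gcongr

/-- For `ℓ ≤ −1`, `ℓ + δ < −1` and `σ > 0` there is `c > 0` such that for
all `λ ∈ (0, min{1, σ²}]`:
`∫₀^{√λ} λ^{2−δ}(λ+r)^{ℓ+δ−3} r³ dr + ∫_{√λ}^{σ} λ² r^{ℓ−δ}(λ+r)^{−3} r³ dr ≤ c λ^{3+ℓ}`. -/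
theorem statement13 (l d σ : ℝ) (hl : l ≤ -1) (hld : l + d < -1) (hσ : 0 < σ) :
    ∃ c : ℝ, 0 < c ∧ ∀ lam : ℝ, 0 < lam → lam ≤ min 1 (σ ^ 2) →
      (∫ r in (0 : ℝ)..Real.sqrt lam, lam ^ (2 - d) * (lam + r) ^ (l + d - 3) * r ^ 3) +
          (∫ r in Real.sqrt lam..σ, lam ^ 2 * r ^ (l - d) * (lam + r) ^ (-3 : ℝ) * r ^ 3) ≤
        c * lam ^ (3 + l) := by
  have hc : 0 < 1 / -(l + d + 1) + σ ^ (-l - d - 1) / (-l - d - 1) :=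
    add_pos (one_div_pos.mpr (by linarith)) (div_pos (rpow_pos_of_pos hσ _) (by linarith))
  refine ⟨_, hc, fun lam hlam hlam_le => ?_⟩
  have hsqrt : √lam ≤ σ :=
    (sqrt_le_sqrt (hlam_le.trans (min_le_right _ _))).trans_eq (sqrt_sq hσ.le)
  calc _ ≤ lam ^ (3 + l) / -(l + d + 1) + lam ^ (3 + l) * (σ ^ (-l - d - 1) / (-l - d - 1)) :=
        add_le_add (integral_inner_le hld hlam (sqrt_nonneg _))
          (integral_outer_le hl hld hlam hsqrt)
    _ = _ := by ring
end

section
/- Let χ : ℝ → [0,1] be an L-Lipschitz function with χ(s) = 0 for s ≤ 1 and χ(s) = 1 for s ≥ 2, and fix α ∈ (0,1). Then there exists a constant c > 0, depending only on L and α, such that for every λ ∈ (0,1] the function χ_λ : X → [0,1] defined by χ_λ(x) := χ(r(x)/√λ) satisfies ‖χ_λ‖_{C^{0,α}_{0,0;λ}} := ‖χ_λ‖_{L∞_{0,0;λ}} + [χ_λ]_{C^{0,α}_{0,0;λ}} ≤ c. -/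
open scoped BigOperators ENNReal

noncomputable section

/-! Where both points satisfy `r ≥ 2√λ`, `χ_λ` is identically `1`, so the Hölder quotient
vanishes. Otherwise one of the two weights `w_{-α,0;λ}` is at most `(2√λ)^α`, while
`χ` has oscillation at most `1` and is `L`-Lipschitz, hence `(L + 1)`-Hölder of exponent `α`;
since `r` is `1`-Lipschitz this gives `|χ_λ(x) - χ_λ(y)| ≤ (L + 1) (d(x,y)/√λ)^α`, and the
factors `√λ^α` cancel. -/

theorem LipschitzWith.dist_le_mul_rpow_of_dist_le_one {α β : Type*} [PseudoMetricSpace α]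
    [PseudoMetricSpace β] {K : NNReal} {f : α → β} (hf : LipschitzWith K f) {a : ℝ}
    (ha0 : 0 ≤ a) (ha1 : a ≤ 1) {x y : α} (hbd : dist (f x) (f y) ≤ 1) :
    dist (f x) (f y) ≤ (K + 1) * dist x y ^ a := by
  rcases le_total 1 (dist x y) with h | h
  · calc dist (f x) (f y) ≤ 1 := hbd
      _ ≤ dist x y ^ a := Real.one_le_rpow h ha0
      _ ≤ (K + 1) * dist x y ^ a := le_mul_of_one_le_left (by positivity) (by simp)
  · calc dist (f x) (f y) ≤ K * dist x y := hf.dist_le_mul x y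
      _ ≤ K * dist x y ^ a := by gcongr; exact Real.self_le_rpow_of_le_one dist_nonneg h ha1
      _ ≤ (K + 1) * dist x y ^ a := by gcongr; simp

section Weights

variable {X : Type*} [MetricSpace X] (Q : Set X)

lemma wt_zero_zero (lam : ℝ) (x : X) : wt Q 0 0 lam x = 1 := by
  unfold wt
  split_ifs <;> norm_num

lemma wt_zero_sub_le_of_infDist_lt {a lam : ℝ} (ha : 0 ≤ a) (hlam : 0 < lam) (hlam1 : lam ≤ 1)
    {x : X} (hx : Metric.infDist x Q < 2 * Real.sqrt lam) :
    wt Q (0 - a) 0 lam x ≤ (2 * Real.sqrt lam) ^ a := by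
  have hr : 0 ≤ Metric.infDist x Q := Metric.infDist_nonneg
  have hlam_le_sqrt : lam ≤ Real.sqrt lam := by
    nlinarith [Real.sq_sqrt hlam.le, Real.sqrt_le_one.mpr hlam1, Real.sqrt_nonneg lam]
  unfold wt
  rw [show -(0 - a) - 0 = a by ring, show -(0 - a) + 0 = a by ring, Real.rpow_zero, one_mul]
  split_ifs with h
  · exact Real.rpow_le_rpow (by positivity) (by linarith) ha
  · exact Real.rpow_le_rpow hr hx.le ha

lemma wnorm_zero_zero_le {lam C : ℝ} {E : Type*} [NormedAddCommGroup E] {f : X → E}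
    (hf : ∀ x, ‖f x‖ ≤ C) : wnorm Q 0 0 lam f ≤ ENNReal.ofReal C :=
  iSup_le fun x => ENNReal.ofReal_le_ofReal (by rw [wt_zero_zero, one_mul]; exact hf x)

end Weights

section Cutoff

variable {X : Type*} [MetricSpace X] (Q : Set X) {L : NNReal} {χ : ℝ → ℝ}
  {a lam : ℝ}

lemma dist_infDist_div_le {s : ℝ} (hs : 0 < s) (x y : X) :
    dist (Metric.infDist x Q / s) (Metric.infDist y Q / s) ≤ dist x y / s := by
  have h := (Metric.lipschitz_infDist_pt Q).dist_le_mul x y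
  rw [NNReal.coe_one, one_mul, Real.dist_eq] at h
  rw [Real.dist_eq, ← sub_div, abs_div, abs_of_pos hs]
  gcongr

lemma cutoff_holderQuotient_le (hLip : LipschitzWith L χ)
    (hrange : ∀ s : ℝ, χ s ∈ Set.Icc (0 : ℝ) 1) (h1 : ∀ s : ℝ, 2 ≤ s → χ s = 1)
    (ha0 : 0 ≤ a) (ha1 : a ≤ 1) (hlam : 0 < lam) (hlam1 : lam ≤ 1) {x y : X} (hxy : x ≠ y) :
    min (wt Q (0 - a) 0 lam x) (wt Q (0 - a) 0 lam y) *
        ‖χ (Metric.infDist x Q / Real.sqrt lam) - χ (Metric.infDist y Q / Real.sqrt lam)‖ /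
        dist x y ^ a ≤ 2 * (L + 1) := by
  set s := Real.sqrt lam
  have hs : 0 < s := Real.sqrt_pos.mpr hlam
  have hD : 0 < dist x y := dist_pos.mpr hxy
  by_cases hfar : 2 * s ≤ Metric.infDist x Q ∧ 2 * s ≤ Metric.infDist y Q
  · rw [h1 _ ((le_div_iff₀ hs).2 (by linarith [hfar.1])),
      h1 _ ((le_div_iff₀ hs).2 (by linarith [hfar.2])), sub_self, norm_zero, mul_zero, zero_div]
    positivity
  have hweight : min (wt Q (0 - a) 0 lam x) (wt Q (0 - a) 0 lam y) ≤ (2 * s) ^ a := by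
    rw [not_and_or, not_le, not_le] at hfar
    rcases hfar with h | h
    · exact (min_le_left _ _).trans (wt_zero_sub_le_of_infDist_lt Q ha0 hlam hlam1 h)
    · exact (min_le_right _ _).trans (wt_zero_sub_le_of_infDist_lt Q ha0 hlam hlam1 h)
  have hdiff : ‖χ (Metric.infDist x Q / s) - χ (Metric.infDist y Q / s)‖ ≤
      (L + 1) * (dist x y / s) ^ a := by
    rw [← dist_eq_norm]
    calc _ ≤ (L + 1) * dist (Metric.infDist x Q / s) (Metric.infDist y Q / s) ^ a :=
          hLip.dist_le_mul_rpow_of_dist_le_one ha0 ha1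
            (Real.dist_le_of_mem_Icc_01 (hrange _) (hrange _))
      _ ≤ (L + 1) * (dist x y / s) ^ a := by gcongr; exact dist_infDist_div_le Q hs x y
  calc _ ≤ (2 * s) ^ a * ((L + 1) * (dist x y / s) ^ a) / dist x y ^ a := by gcongr
    _ = 2 ^ a * (L + 1) := by
      rw [Real.mul_rpow zero_le_two hs.le, Real.div_rpow hD.le hs.le]
      have : 0 < s ^ a := Real.rpow_pos_of_pos hs a
      have : 0 < dist x y ^ a := Real.rpow_pos_of_pos hD a
      field_simp
    _ ≤ 2 * (L + 1) := by gcongr; exact Real.rpow_le_self_of_one_le one_le_two ha1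

lemma wseminorm_cutoff_le (hLip : LipschitzWith L χ)
    (hrange : ∀ s : ℝ, χ s ∈ Set.Icc (0 : ℝ) 1) (h1 : ∀ s : ℝ, 2 ≤ s → χ s = 1)
    (ha0 : 0 ≤ a) (ha1 : a ≤ 1) (hlam : 0 < lam) (hlam1 : lam ≤ 1) :
    wseminorm Q 0 0 lam a (fun x => χ (Metric.infDist x Q / Real.sqrt lam)) ≤
      ENNReal.ofReal (2 * (L + 1)) :=
  iSup_le fun p => ENNReal.ofReal_le_ofReal
    (cutoff_holderQuotient_le Q hLip hrange h1 ha0 ha1 hlam hlam1 p.2.1)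

end Cutoff

theorem statement15_general {X : Type*} [MetricSpace X] (Q : Set X)
    (L : NNReal) (χ : ℝ → ℝ) (hLip : LipschitzWith L χ)
    (hrange : ∀ s : ℝ, χ s ∈ Set.Icc (0 : ℝ) 1)
    (h1 : ∀ s : ℝ, 2 ≤ s → χ s = 1)
    (a : ℝ) (ha0 : 0 < a) (ha1 : a < 1) :
    ∃ c : ℝ, 0 < c ∧ ∀ lam : ℝ, 0 < lam → lam ≤ 1 →
      wnorm Q 0 0 lam (fun x => χ (Metric.infDist x Q / Real.sqrt lam)) +
          wseminorm Q 0 0 lam a (fun x => χ (Metric.infDist x Q / Real.sqrt lam)) ≤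
        ENNReal.ofReal c := by
  refine ⟨1 + 2 * (L + 1), by positivity, fun lam hlam hlam1 => ?_⟩
  have hbound : ∀ x, ‖χ (Metric.infDist x Q / Real.sqrt lam)‖ ≤ 1 := fun x => by
    rw [Real.norm_of_nonneg (hrange _).1]
    exact (hrange _).2
  rw [ENNReal.ofReal_add zero_le_one (by positivity)]
  exact add_le_add (wnorm_zero_zero_le Q hbound)
    (wseminorm_cutoff_le Q hLip hrange h1 ha0.le ha1.le hlam hlam1)

/-- Let `χ : ℝ → [0,1]` be `L`-Lipschitz with `χ ≡ 0` on `(−∞,1]` and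
`χ ≡ 1` on `[2,∞)`, and let `α ∈ (0,1)`. Then there is `c > 0`, depending only on `L` and
`α`, such that for every `λ ∈ (0,1]` the function `χ_λ(x) = χ(r(x)/√λ)` satisfies
`‖χ_λ‖_{C^{0,α}_{0,0;λ}} = ‖χ_λ‖_{L∞_{0,0;λ}} + [χ_λ]_{C^{0,α}_{0,0;λ}} ≤ c`. -/
theorem statement15 {X : Type*} [MetricSpace X] (Q : Set X) (hQ : Q.Nonempty)
    (L : NNReal) (χ : ℝ → ℝ) (hLip : LipschitzWith L χ)
    (hrange : ∀ s : ℝ, χ s ∈ Set.Icc (0 : ℝ) 1)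
    (h0 : ∀ s : ℝ, s ≤ 1 → χ s = 0) (h1 : ∀ s : ℝ, 2 ≤ s → χ s = 1)
    (a : ℝ) (ha0 : 0 < a) (ha1 : a < 1) :
    ∃ c : ℝ, 0 < c ∧ ∀ lam : ℝ, 0 < lam → lam ≤ 1 →
      wnorm Q 0 0 lam (fun x => χ (Metric.infDist x Q / Real.sqrt lam)) +
          wseminorm Q 0 0 lam a (fun x => χ (Metric.infDist x Q / Real.sqrt lam)) ≤
        ENNReal.ofReal c :=
  statement15_general Q L χ hLip hrange h1 a ha0 ha1
end
end
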